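/- Let (P₁,P₂,P₃,P₄) be nonzero null vectors in ℂ^{2,1}, pairwise linearly independent, and set X₁ = X(p₁,p₂,p₃,p₄), X₂ = X(p₁,p₃,p₂,p₄), A = 𝔸(p₁,p₂,p₃). Then the vectors P₁,P₂,P₃,P₄ span a complex subspace of ℂ³ of dimension 2 (i.e. the quadruple is ℂ-plane, all four points lying on one chain) if and only if A = π/2 or A = −π/2, X₁ and X₂ are real numbers, and X₁ + X₂ = 1. -/

import Mathlib

open Complex Matrix
open scoped ComplexConjugate

noncomputable section

/-- The Hermitian form of signature `(n,1)` on `ℂ^{n+1}`: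
`⟨Z,W⟩ = Z₁·conj W_{n+1} + Z₂·conj W₂ + ⋯ + Z_n·conj W_n + Z_{n+1}·conj W₁`. -/
def herm {n : ℕ} (Z W : Fin (n + 1) → ℂ) : ℂ :=
  Z 0 * conj (W (Fin.last n)) + Z (Fin.last n) * conj (W 0) +
    ∑ i ∈ Finset.univ.filter (fun i : Fin (n + 1) => i ≠ 0 ∧ i ≠ Fin.last n),
      Z i * conj (W i)

/-- The Gram matrix of a quadruple of vectors. -/
def gram {n : ℕ} (P : Fin 4 → Fin (n + 1) → ℂ) : Matrix (Fin 4) (Fin 4) ℂ :=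
  fun i j => herm (P i) (P j)

/-- A quadruple of nonzero null vectors, pairwise linearly independent. -/
def IsNullQuadruple {n : ℕ} (P : Fin 4 → Fin (n + 1) → ℂ) : Prop :=
  (∀ i, P i ≠ 0) ∧ (∀ i, herm (P i) (P i) = 0) ∧
    ∀ i j, i ≠ j → LinearIndependent ℂ ![P i, P j]

/-- The Korányi–Reimann complex cross-ratio. -/
def crossRatio {n : ℕ} (P₁ P₂ P₃ P₄ : Fin (n + 1) → ℂ) : ℂ :=
  (herm P₃ P₁ * herm P₄ P₂) / (herm P₄ P₁ * herm P₃ P₂)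

/-- Cartan's angular invariant. -/
def cartan {n : ℕ} (P₁ P₂ P₃ : Fin (n + 1) → ℂ) : ℝ :=
  (-(herm P₁ P₂ * herm P₂ P₃ * herm P₃ P₁)).arg

/-- `G` is the normalized Gram matrix of the quadruple `P`. -/
def IsNormalizedGram {n : ℕ} (P : Fin 4 → Fin (n + 1) → ℂ)
    (G : Matrix (Fin 4) (Fin 4) ℂ) : Prop :=
  (∃ d : Fin 4 → ℂ, (∀ i, d i ≠ 0) ∧
      G = (Matrix.diagonal d)ᴴ * gram P * Matrix.diagonal d) ∧
    G 0 1 = 1 ∧ G 1 2 = 1 ∧ G 2 3 = 1 ∧ ‖G 0 2‖ = 1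

/-- Two quadruples are congruent if a linear map preserving the Hermitian form
sends one to the other up to nonzero scalars. -/
def HermCongruent {n : ℕ} (P P' : Fin 4 → Fin (n + 1) → ℂ) : Prop :=
  ∃ A : (Fin (n + 1) → ℂ) →ₗ[ℂ] (Fin (n + 1) → ℂ),
    (∀ Z W, herm (A Z) (A W) = herm Z W) ∧
    ∃ lam : Fin 4 → ℂ, (∀ i, lam i ≠ 0) ∧ ∀ i, A (P i) = lam i • P' i

/-!
For null vectors `X, Y` with `⟨X,Y⟩ ≠ 0`, a null vector `Q` lies in their complex span iff the
triple product `⟨X,Y⟩⟨Y,Q⟩⟨Q,X⟩` is purely imaginary: subtracting from `Q` the combination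
`sX + tY` that makes the remainder `R` orthogonal to `X` and `Y` gives
`⟨R,R⟩ = -2 Re (⟨X,Y⟩⟨Y,Q⟩⟨Q,X⟩) / |⟨X,Y⟩|²`, and in signature `(2,1)` a null vector orthogonal
to two independent null vectors vanishes. Hence the quadruple is ℂ-plane iff the triple products
of `(P₁,P₂,P₃)` and `(P₁,P₂,P₄)` are both purely imaginary; the first condition says `𝔸 = ±π/2`.
Given it, `X₁` is real iff the second triple product is purely imaginary, since `X₁` times a
positive real number is the first triple product times the conjugate of the second.
Finally `X₁ + X₂ = 1` as soon as `P₃` is a combination `sP₁ + tP₂`, by direct computation.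
-/

section Sesquilinear

variable {n : ℕ}

theorem conj_herm (Z W : Fin (n + 1) → ℂ) : conj (herm Z W) = herm W Z := by
  simp only [herm, map_add, map_sum, map_mul, Complex.conj_conj, mul_comm (conj _)]
  ring

theorem herm_add_left (Z Z' W : Fin (n + 1) → ℂ) : herm (Z + Z') W = herm Z W + herm Z' W := by
  simp only [herm, Pi.add_apply, add_mul, Finset.sum_add_distrib]
  ring

theorem herm_smul_left (s : ℂ) (Z W : Fin (n + 1) → ℂ) : herm (s • Z) W = s * herm Z W := by
  simp only [herm, Pi.smul_apply, smul_eq_mul, mul_add, Finset.mul_sum, mul_assoc]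

theorem herm_add_right (Z W W' : Fin (n + 1) → ℂ) : herm Z (W + W') = herm Z W + herm Z W' := by
  rw [← conj_herm, herm_add_left, map_add, conj_herm, conj_herm]

theorem herm_smul_right (s : ℂ) (Z W : Fin (n + 1) → ℂ) :
    herm Z (s • W) = conj s * herm Z W := by
  rw [← conj_herm, herm_smul_left, map_mul, conj_herm]

theorem herm_sub_left (Z Z' W : Fin (n + 1) → ℂ) :
    herm (Z - Z') W = herm Z W - herm Z' W := by
  simp only [herm, Pi.sub_apply, sub_mul, Finset.sum_sub_distrib]
  ring

theorem herm_sub_right (Z W W' : Fin (n + 1) → ℂ) :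
    herm Z (W - W') = herm Z W - herm Z W' := by
  rw [← conj_herm, herm_sub_left, map_sub, conj_herm, conj_herm]

end Sesquilinear

theorem re_eq_zero_iff_add_conj_eq_zero (z : ℂ) : z.re = 0 ↔ z + conj z = 0 := by
  rw [Complex.add_conj]
  norm_cast
  simp

theorem im_mul_conj_eq_zero_iff {z w : ℂ} (hz : z.re = 0) (hz0 : z ≠ 0) :
    (z * conj w).im = 0 ↔ w.re = 0 := by
  have him : z.im ≠ 0 := fun h => hz0 (Complex.ext hz h)
  simp [Complex.mul_im, hz, him]

theorem arg_eq_pi_div_two_or_eq_neg_pi_div_two_iff {z : ℂ} (hz : z ≠ 0) :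
    (z.arg = Real.pi / 2 ∨ z.arg = -(Real.pi / 2)) ↔ z.re = 0 := by
  rw [Complex.arg_eq_pi_div_two_iff, Complex.arg_eq_neg_pi_div_two_iff, ← and_or_left,
    and_iff_left_iff_imp]
  intro hre
  rcases lt_trichotomy z.im 0 with h | h | h
  · exact Or.inr h
  · exact absurd (Complex.ext hre h) hz
  · exact Or.inl h

section Invariants

variable {n : ℕ} {X Y Z W : Fin (n + 1) → ℂ}

def hermTriple (X Y Z : Fin (n + 1) → ℂ) : ℂ := herm X Y * herm Y Z * herm Z X

theorem cartan_eq_pi_div_two_or_eq_neg_pi_div_two_iff (hT0 : hermTriple X Y Z ≠ 0) :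
    (cartan X Y Z = Real.pi / 2 ∨ cartan X Y Z = -(Real.pi / 2)) ↔ (hermTriple X Y Z).re = 0 := by
  rw [cartan, ← hermTriple, arg_eq_pi_div_two_or_eq_neg_pi_div_two_iff (neg_ne_zero.mpr hT0),
    Complex.neg_re, neg_eq_zero]

theorem crossRatio_mul_normSq (hWX : herm W X ≠ 0) (hZY : herm Z Y ≠ 0) :
    crossRatio X Y Z W * ((normSq (herm X Y) * normSq (herm W X) * normSq (herm Z Y) : ℝ) : ℂ) =
      hermTriple X Y Z * conj (hermTriple X Y W) := by
  simp only [crossRatio, hermTriple, Complex.ofReal_mul, ← Complex.mul_conj, map_mul, conj_herm]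
  field_simp

theorem crossRatio_im_eq_zero_iff (hT : (hermTriple X Y Z).re = 0) (hT0 : hermTriple X Y Z ≠ 0)
    (hWX : herm W X ≠ 0) :
    (crossRatio X Y Z W).im = 0 ↔ (hermTriple X Y W).re = 0 := by
  have hZY : herm Z Y ≠ 0 := by
    rw [← conj_herm, map_ne_zero]
    exact right_ne_zero_of_mul (left_ne_zero_of_mul hT0)
  have hr : (0 : ℝ) < normSq (herm X Y) * normSq (herm W X) * normSq (herm Z Y) := by
    have hXY := left_ne_zero_of_mul (left_ne_zero_of_mul hT0)
    simp only [← Complex.normSq_pos] at hXY hWX hZY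
    positivity
  rw [← im_mul_conj_eq_zero_iff hT hT0, ← crossRatio_mul_normSq hWX hZY, Complex.im_mul_ofReal,
    mul_eq_zero, or_iff_left hr.ne']

theorem hermTriple_re_eq_zero_of_mem_span_pair (hX : herm X X = 0) (hY : herm Y Y = 0)
    (hZ : herm Z Z = 0) (hZXY : Z ∈ Submodule.span ℂ {X, Y}) : (hermTriple X Y Z).re = 0 := by
  obtain ⟨s, t, rfl⟩ := Submodule.mem_span_pair.mp hZXY
  rw [re_eq_zero_iff_add_conj_eq_zero]
  have hYX : herm Y X = conj (herm X Y) := (conj_herm X Y).symm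
  simp only [hermTriple, herm_add_left, herm_add_right, herm_smul_left, herm_smul_right, hX, hY,
    hYX, map_mul, Complex.conj_conj, mul_zero, zero_add, add_zero] at hZ ⊢
  linear_combination (herm X Y * conj (herm X Y)) * hZ

theorem crossRatio_add_crossRatio_swap (hX : herm X X = 0) (hY : herm Y Y = 0)
    (hZ : herm Z Z = 0) (hZXY : Z ∈ Submodule.span ℂ {X, Y}) (hZY : herm Z Y ≠ 0)
    (hWX : herm W X ≠ 0) : crossRatio X Y Z W + crossRatio X Z Y W = 1 := by
  obtain ⟨s, t, rfl⟩ := Submodule.mem_span_pair.mp hZXY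
  have hYX : herm Y X = conj (herm X Y) := (conj_herm X Y).symm
  simp only [crossRatio, herm_add_left, herm_add_right, herm_smul_left, herm_smul_right, hX, hY,
    hYX, mul_zero, zero_add, add_zero] at hZ hZY ⊢
  obtain ⟨hs, ha⟩ := mul_ne_zero_iff.mp hZY
  have hs' : conj s ≠ 0 := (map_ne_zero _).mpr hs
  have ha' : conj (herm X Y) ≠ 0 := (map_ne_zero _).mpr ha
  field_simp
  linear_combination herm W Y * hZ

end Invariants

theorem herm_fin_three (Z W : Fin 3 → ℂ) :
    herm Z W = Z 0 * conj (W 2) + Z 2 * conj (W 0) + Z 1 * conj (W 1) := by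
  rw [herm, show Finset.univ.filter (fun i : Fin 3 => i ≠ 0 ∧ i ≠ Fin.last 2) = {1} by decide]
  simp [Fin.last]

theorem apply_one_eq_zero_of_herm_self_eq_zero {R : Fin 3 → ℂ} (hR : herm R R = 0)
    (h0 : R 0 = 0) : R 1 = 0 := by
  simpa [herm_fin_three, h0] using hR

theorem exists_eq_smul_of_herm_eq_zero {P Q : Fin 3 → ℂ} (hP : herm P P = 0) (hP0 : P ≠ 0)
    (hQ : herm Q Q = 0) (hPQ : herm P Q = 0) : ∃ μ : ℂ, Q = μ • P := by
  by_cases h0 : P 0 = 0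
  · have h1 := apply_one_eq_zero_of_herm_self_eq_zero hP h0
    have h2 : P 2 ≠ 0 := fun h2 => hP0 (funext fun i => by fin_cases i <;> assumption)
    have hQ0 : Q 0 = 0 := by simpa [herm_fin_three, h0, h1, h2] using hPQ
    have hQ1 := apply_one_eq_zero_of_herm_self_eq_zero hQ hQ0
    refine ⟨Q 2 / P 2, funext fun i => ?_⟩
    fin_cases i <;> simp [hQ0, hQ1, h0, h1, h2]
  · set R := Q - (Q 0 / P 0) • P
    have hR0 : R 0 = 0 := by simp [R, h0]
    have hQP : herm Q P = 0 := by rw [← conj_herm, hPQ, map_zero]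
    have hRR : herm R R = 0 := by
      simp only [R, herm_sub_left, herm_sub_right, herm_smul_left, herm_smul_right, hP, hQ, hPQ,
        hQP]
      ring
    have hPR : herm P R = 0 := by
      simp only [R, herm_sub_right, herm_smul_right, hP, hPQ]
      ring
    have hR1 := apply_one_eq_zero_of_herm_self_eq_zero hRR hR0
    have hR2 : R 2 = 0 := by simpa [herm_fin_three, hR0, hR1, h0] using hPR
    refine ⟨Q 0 / P 0, sub_eq_zero.mp (funext fun i => ?_)⟩
    fin_cases i <;> assumption

theorem herm_ne_zero_of_linearIndependent {X Y : Fin 3 → ℂ} (hX : herm X X = 0)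
    (hY : herm Y Y = 0) (hXY : LinearIndependent ℂ ![X, Y]) : herm X Y ≠ 0 := by
  intro h
  obtain ⟨μ, rfl⟩ := exists_eq_smul_of_herm_eq_zero hX (hXY.ne_zero 0) hY h
  simpa using LinearIndependent.pair_iff.mp hXY μ (-1) (by simp)

theorem eq_zero_of_herm_eq_zero_of_linearIndependent {X Y R : Fin 3 → ℂ} (hX : herm X X = 0)
    (hY : herm Y Y = 0) (hXY : LinearIndependent ℂ ![X, Y]) (hR : herm R R = 0)
    (hRX : herm R X = 0) (hRY : herm R Y = 0) : R = 0 := by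
  by_contra hR0
  obtain ⟨μ, rfl⟩ := exists_eq_smul_of_herm_eq_zero hR hR0 hX hRX
  obtain ⟨ν, rfl⟩ := exists_eq_smul_of_herm_eq_zero hR hR0 hY hRY
  obtain ⟨-, hμ⟩ := LinearIndependent.pair_iff.mp hXY ν (-μ)
    (by rw [smul_smul, smul_smul]; simp [mul_comm])
  exact hXY.ne_zero 0 (by simp [neg_eq_zero.mp hμ])

theorem mem_span_pair_of_hermTriple_re_eq_zero {X Y Q : Fin 3 → ℂ} (hX : herm X X = 0)
    (hY : herm Y Y = 0) (hQ : herm Q Q = 0) (hXY : LinearIndependent ℂ ![X, Y])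
    (hT : (hermTriple X Y Q).re = 0) : Q ∈ Submodule.span ℂ {X, Y} := by
  have ha := herm_ne_zero_of_linearIndependent hX hY hXY
  have ha' : conj (herm X Y) ≠ 0 := (map_ne_zero _).mpr ha
  set s := herm Q Y / herm X Y
  set t := herm Q X / conj (herm X Y)
  set R := Q - (s • X + t • Y)
  have hYX : herm Y X = conj (herm X Y) := (conj_herm X Y).symm
  have hXQ : herm X Q = conj (herm Q X) := (conj_herm Q X).symm
  have hYQ : herm Y Q = conj (herm Q Y) := (conj_herm Q Y).symm
  have hRX : herm R X = 0 := by
    simp only [R, herm_sub_left, herm_add_left, herm_smul_left, hX, hYX, t]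
    field_simp
    ring
  have hRY : herm R Y = 0 := by
    simp only [R, herm_sub_left, herm_add_left, herm_smul_left, hY, s]
    field_simp
    ring
  have hRR : herm R R = 0 := by
    rw [re_eq_zero_iff_add_conj_eq_zero] at hT
    simp only [hermTriple, map_mul, Complex.conj_conj, hYQ] at hT
    simp only [R, herm_sub_left, herm_sub_right, herm_add_left, herm_add_right, herm_smul_left,
      herm_smul_right, hX, hY, hQ, hYX, hXQ, hYQ, s, t, map_div₀, Complex.conj_conj]
    field_simp
    linear_combination -hT
  have hR := eq_zero_of_herm_eq_zero_of_linearIndependent hX hY hXY hRR hRX hRY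
  exact Submodule.mem_span_pair.mpr ⟨s, t, (sub_eq_zero.mp hR).symm⟩

theorem mem_span_pair_iff_hermTriple_re_eq_zero {X Y Q : Fin 3 → ℂ} (hX : herm X X = 0)
    (hY : herm Y Y = 0) (hQ : herm Q Q = 0) (hXY : LinearIndependent ℂ ![X, Y]) :
    Q ∈ Submodule.span ℂ {X, Y} ↔ (hermTriple X Y Q).re = 0 :=
  ⟨hermTriple_re_eq_zero_of_mem_span_pair hX hY hQ,
    mem_span_pair_of_hermTriple_re_eq_zero hX hY hQ hXY⟩

theorem finrank_span_range_eq_two_iff {K V : Type*} [Field K] [AddCommGroup V] [Module K V]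
    {P : Fin 4 → V} (h : LinearIndependent K ![P 0, P 1]) :
    Module.finrank K (Submodule.span K (Set.range P)) = 2 ↔
      P 2 ∈ Submodule.span K {P 0, P 1} ∧ P 3 ∈ Submodule.span K {P 0, P 1} := by
  have : FiniteDimensional K (Submodule.span K (Set.range P)) :=
    FiniteDimensional.span_of_finite K (Set.finite_range P)
  have h2 : Module.finrank K (Submodule.span K {P 0, P 1}) = 2 := by
    rw [← Matrix.range_cons_cons_empty (P 0) (P 1) ![], finrank_span_eq_card h, Fintype.card_fin]
  have hle : Submodule.span K {P 0, P 1} ≤ Submodule.span K (Set.range P) :=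
    Submodule.span_mono (Set.pair_subset (Set.mem_range_self 0) (Set.mem_range_self 1))
  have hge : Submodule.span K (Set.range P) ≤ Submodule.span K {P 0, P 1} ↔
      P 2 ∈ Submodule.span K {P 0, P 1} ∧ P 3 ∈ Submodule.span K {P 0, P 1} := by
    have h0 : P 0 ∈ Submodule.span K {P 0, P 1} := Submodule.subset_span (by simp)
    have h1 : P 1 ∈ Submodule.span K {P 0, P 1} := Submodule.subset_span (by simp)
    simp [Submodule.span_le, Set.range_subset_iff, Fin.forall_fin_succ, h0, h1]
  rw [← hge]
  refine ⟨fun hr => (Submodule.eq_of_le_of_finrank_eq hle (h2.trans hr.symm)).ge, fun hr => ?_⟩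
  rw [le_antisymm hr hle, h2]

/-- characterization of ℂ-plane quadruples. -/
theorem stmt14 (P : Fin 4 → Fin 3 → ℂ) (hP : IsNullQuadruple (n := 2) P)
    (X₁ X₂ : ℂ) (A : ℝ)
    (hX₁ : X₁ = crossRatio (P 0) (P 1) (P 2) (P 3))
    (hX₂ : X₂ = crossRatio (P 0) (P 2) (P 1) (P 3))
    (hA : A = cartan (P 0) (P 1) (P 2)) :
    Module.finrank ℂ (Submodule.span ℂ (Set.range P)) = 2 ↔
      ((A = Real.pi / 2 ∨ A = -(Real.pi / 2)) ∧
        X₁.im = 0 ∧ X₂.im = 0 ∧ X₁ + X₂ = 1) := by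
  obtain ⟨-, hnull, hli⟩ := hP
  have hne (i j : Fin 4) (hij : i ≠ j) : herm (P i) (P j) ≠ 0 :=
    herm_ne_zero_of_linearIndependent (hnull i) (hnull j) (hli i j hij)
  have hT0 : hermTriple (P 0) (P 1) (P 2) ≠ 0 :=
    mul_ne_zero (mul_ne_zero (hne 0 1 (by decide)) (hne 1 2 (by decide))) (hne 2 0 (by decide))
  have hspan (i : Fin 4) :=
    mem_span_pair_iff_hermTriple_re_eq_zero (hnull 0) (hnull 1) (hnull i) (hli 0 1 (by decide))
  have hX₁im := crossRatio_im_eq_zero_iff (W := P 3) (hT0 := hT0) (hWX := hne 3 0 (by decide))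
  subst hX₁ hX₂ hA
  rw [finrank_span_range_eq_two_iff (hli 0 1 (by decide)), hspan 2, hspan 3,
    cartan_eq_pi_div_two_or_eq_neg_pi_div_two_iff hT0]
  constructor
  · rintro ⟨hT₂, hT₃⟩
    have hsum := crossRatio_add_crossRatio_swap (hnull 0) (hnull 1) (hnull 2) ((hspan 2).mpr hT₂)
      (hne 2 1 (by decide)) (hne 3 0 (by decide))
    have hX₁real := (hX₁im hT₂).mpr hT₃
    refine ⟨hT₂, hX₁real, ?_, hsum⟩
    rw [eq_sub_of_add_eq' hsum, Complex.sub_im, Complex.one_im, hX₁real, sub_zero]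
  · rintro ⟨hT₂, hX₁real, -, -⟩
    exact ⟨hT₂, (hX₁im hT₂).mp hX₁real⟩
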